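/- arXiv:math/0402447 — 2 statements merged into one kernel-verified Lean document; each statement's English description precedes it below -/
import Mathlib

section
/- Let g ≥ 3 be an odd integer. Then the element E_g = [(1−u²v)^g(1−uv²)^g − (uv)^{g+1}(1−u)^g(1−v)^g]/((1−uv)(1−(uv)²)) − ((uv)^{g−1}/2)·[(1−u)^g(1−v)^g/(1−uv) − (1+u)^g(1+v)^g/(1+uv)] of the field ℚ(u,v) of rational functions in two variables over ℚ is not a polynomial, i.e. it does not lie in the image of ℚ[u,v] in its fraction field. -/
noncomputable section

/-- The field ℚ(u,v) of rational functions in two variables over ℚ. -/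
abbrev QuvField : Type := FractionRing (MvPolynomial (Fin 2) ℚ)

/-- The image of the variable `u` in ℚ(u,v). -/
def uu : QuvField := algebraMap (MvPolynomial (Fin 2) ℚ) QuvField (MvPolynomial.X 0)

/-- The image of the variable `v` in ℚ(u,v). -/
def vv : QuvField := algebraMap (MvPolynomial (Fin 2) ℚ) QuvField (MvPolynomial.X 1)

/-- `q = uv`. -/
def qq : QuvField := uu * vv

/-- The closed-form stringy E-function of `M_0` for genus `g`, as an element of ℚ(u,v). -/
def Estringy (g : ℕ) : QuvField :=
  ((1 - uu ^ 2 * vv) ^ g * (1 - uu * vv ^ 2) ^ g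
      - qq ^ (g + 1) * (1 - uu) ^ g * (1 - vv) ^ g) / ((1 - qq) * (1 - qq ^ 2))
  - (qq ^ (g - 1) / 2) * ((1 - uu) ^ g * (1 - vv) ^ g / (1 - qq)
      - (1 + uu) ^ g * (1 + vv) ^ g / (1 + qq))

set_option maxHeartbeats 2000000 in
open MvPolynomial in
theorem stringy_E_not_polynomial_of_odd (g : ℕ) (hg : 3 ≤ g) (hodd : Odd g) :
    Estringy g ∉ Set.range (algebraMap (MvPolynomial (Fin 2) ℚ) QuvField) := by
  rintro ⟨P, hP⟩
  obtain ⟨m, rfl⟩ : ∃ m, g = m + 1 := ⟨g - 1, by omega⟩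
  have hinj : Function.Injective (algebraMap (MvPolynomial (Fin 2) ℚ) QuvField) :=
    IsFractionRing.injective _ _
  have hne : ∀ p : MvPolynomial (Fin 2) ℚ, MvPolynomial.eval (fun _ => (0:ℚ)) p ≠ 0 →
      algebraMap (MvPolynomial (Fin 2) ℚ) QuvField p ≠ 0 := by
    intro p hp h0
    exact hp (by rw [(map_eq_zero_iff _ hinj).mp h0]; simp)
  have hq1 : (1 : QuvField) - qq ≠ 0 := by
    have h : (1:QuvField) - qq = algebraMap (MvPolynomial (Fin 2) ℚ) QuvField (1 - X 0 * X 1) := by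
      simp [qq, uu, vv]
    rw [h]; exact hne _ (by simp)
  have hq2 : (1 : QuvField) + qq ≠ 0 := by
    have h : (1:QuvField) + qq = algebraMap (MvPolynomial (Fin 2) ℚ) QuvField (1 + X 0 * X 1) := by
      simp [qq, uu, vv]
    rw [h]; exact hne _ (by simp)
  have hq3 : (1 : QuvField) - qq ^ 2 ≠ 0 := by
    have h : (1:QuvField) - qq ^ 2 = (1 - qq) * (1 + qq) := by ring
    rw [h]; exact mul_ne_zero hq1 hq2
  set g := m + 1 with hgdef
  -- the cleared-denominator identity in QuvField
  have heq : algebraMap (MvPolynomial (Fin 2) ℚ) QuvField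
      (P * (2 * (1 - X 0 * X 1) ^ 2 * (1 + X 0 * X 1)))
      = algebraMap (MvPolynomial (Fin 2) ℚ) QuvField
        (2 * ((1 - (X 0) ^ 2 * X 1) ^ g * (1 - X 0 * (X 1) ^ 2) ^ g
              - (X 0 * X 1) ^ (g + 1) * (1 - X 0) ^ g * (1 - X 1) ^ g)
          - (X 0 * X 1) ^ m * ((1 - X 0) ^ g * (1 - X 1) ^ g)
              * (1 - X 0 * X 1) * (1 + X 0 * X 1)
          + (X 0 * X 1) ^ m * ((1 + X 0) ^ g * (1 + X 1) ^ g)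
              * (1 - X 0 * X 1) ^ 2) := by
    push_cast [map_mul, map_add, map_sub, map_pow, map_one, map_ofNat]
    rw [show algebraMap (MvPolynomial (Fin 2) ℚ) QuvField (X 0) = uu from rfl,
        show algebraMap (MvPolynomial (Fin 2) ℚ) QuvField (X 1) = vv from rfl, ← qq, hP]
    rw [Estringy, hgdef]
    simp only [Nat.add_sub_cancel]
    field_simp
    ring
  have hpoly := hinj heq
  have hev := congrArg (MvPolynomial.eval (![2, -1/2] : Fin 2 → ℚ)) hpoly
  simp only [map_mul, map_add, map_sub, map_pow, map_one, map_ofNat,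
    MvPolynomial.eval_X] at hev
  norm_num at hev
  have hm : Even m := by rcases hodd with ⟨k, hk⟩; exact ⟨k, by omega⟩
  have h1 : ((-1:ℚ))^(m+1) = -1 := by rw [pow_succ, hm.neg_one_pow]; norm_num
  have h2 : ((-1:ℚ))^(m+1+1) = 1 := by rw [pow_succ, h1]; norm_num
  have h3 : (3:ℚ)^(m+1) * (1/2)^(m+1) = (3/2)^(m+1) := by rw [← mul_pow]; norm_num
  rw [hgdef] at hev
  rw [h1, h2, h3, hm.neg_one_pow] at hev
  have hpos : (0:ℚ) < (3/2) ^ (m+1) := by positivity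
  nlinarith [hev, hpos]

end
end

section
/- Let g ≥ 4 be an even integer. Then the element E_g = [(1−u²v)^g(1−uv²)^g − (uv)^{g+1}(1−u)^g(1−v)^g]/((1−uv)(1−(uv)²)) − ((uv)^{g−1}/2)·[(1−u)^g(1−v)^g/(1−uv) − (1+u)^g(1+v)^g/(1+uv)] of the field ℚ(u,v) of rational functions in two variables over ℚ is a polynomial, i.e. it lies in the image of ℚ[u,v] in its fraction field. -/
noncomputable section

private lemma hEaux {K : Type} [Field K] (A B C q : K) (n : ℕ)
    (ht : 1 - q ≠ 0) (h1q : 1 + q ≠ 0) (h2 : (2:K) ≠ 0) :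
    ((A - q^(n+2)*B) / ((1-q)*(1-q^2)) - (q^n/2) * (B/(1-q) - C/(1+q)))
        * (2*((1-q)^2*(1+q)))
      = 2*A - q^n*(1+q^2)*B + q^n*(1-q)^2*C := by
  have e2 : (1:K) - q^2 = (1-q)*(1+q) := by ring
  rw [e2]
  field_simp
  ring

set_option maxHeartbeats 2000000 in
theorem stringy_E_polynomial_of_even (g : ℕ) (hg : 4 ≤ g) (heven : Even g) :
    Estringy g ∈ Set.range (algebraMap (MvPolynomial (Fin 2) ℚ) QuvField) := by
  obtain ⟨l, rfl⟩ : ∃ l, g = 2 * l + 4 := by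
    obtain ⟨m, hm⟩ := heven; exact ⟨m - 2, by omega⟩
  clear hg heven
  have hq : qq = uu * vv := rfl
  have hinj := IsFractionRing.injective (MvPolynomial (Fin 2) ℚ) QuvField
  have hne : ∀ p : MvPolynomial (Fin 2) ℚ,
      MvPolynomial.eval (fun _ => (0:ℚ)) p ≠ 0 →
      algebraMap (MvPolynomial (Fin 2) ℚ) QuvField p ≠ 0 := by
    intro p hp h
    apply hp
    rw [show p = 0 from hinj (by simpa using h)]
    simp
  have ht : (1 : QuvField) - qq ≠ 0 := by
    have := hne (1 - MvPolynomial.X 0 * MvPolynomial.X 1) (by simp)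
    simpa [hq, uu, vv] using this
  have h1q : (1 : QuvField) + qq ≠ 0 := by
    have := hne (1 + MvPolynomial.X 0 * MvPolynomial.X 1) (by simp)
    simpa [hq, uu, vv] using this
  have h2 : (2 : QuvField) ≠ 0 := by
    have := hne (MvPolynomial.C 2) (by simp)
    rw [map_ofNat] at this
    simp only [map_ofNat] at this
    exact this
  -- canonical sums
  -- S1 : geometric sum for C^g - P^g
  -- S2 : binomial sum
  have hA : (1 - uu^2*vv)^(2*l+4) * (1 - uu*vv^2)^(2*l+4)
      = (∑ k ∈ Finset.range (2*l+4),
          ((1-qq)^2*(1+qq))^(k+1) * (qq*((1-uu)*(1-vv)))^(2*l+3-k)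
            * (((2*l+4).choose (k+1) : ℕ) : QuvField))
        + (qq*((1-uu)*(1-vv)))^(2*l+4) := by
    rw [← mul_pow]
    have hbase : (1 - uu^2*vv) * (1 - uu*vv^2)
        = (1-qq)^2*(1+qq) + qq*((1-uu)*(1-vv)) := by
      rw [hq]; ring
    rw [hbase, add_pow, Finset.sum_range_succ']
    congr 1
    · apply Finset.sum_congr rfl
      intro k _
      have : 2*l+4-(k+1) = 2*l+3-k := by omega
      rw [this]
    · simp
  have hS2 : (∑ k ∈ Finset.range (2*l+4),
          ((1-qq)^2*(1+qq))^(k+1) * (qq*((1-uu)*(1-vv)))^(2*l+3-k)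
            * (((2*l+4).choose (k+1) : ℕ) : QuvField))
      = (∑ k ∈ Finset.range (2*l+4),
          (((2*l+4).choose (k+1) : ℕ) : QuvField)
            * (((1-qq)^2*(1+qq))^k * (qq*((1-uu)*(1-vv)))^(2*l+3-k)))
          * ((1-qq)^2*(1+qq)) := by
    rw [Finset.sum_mul]
    apply Finset.sum_congr rfl
    intro k _
    ring
  have hgeom : (1+uu)^(2*l+4)*(1+vv)^(2*l+4)
      = 4*(uu+vv)*(1+qq) * (∑ j ∈ Finset.range (l+2),
          (((1+uu)*(1+vv))^2)^j * (((1-uu)*(1-vv))^2)^(l+2-1-j))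
        + ((1-uu)*(1-vv))^(2*l+4) := by
    rw [← mul_pow]
    have h3 := geom_sum₂_mul (((1+uu)*(1+vv))^2) (((1-uu)*(1-vv))^2) (l+2)
    have en : 2*(l+2) = 2*l+4 := by omega
    have e1 : (((1+uu)*(1+vv))^2)^(l+2) = ((1+uu)*(1+vv))^(2*l+4) := by
      rw [← pow_mul, en]
    have e2 : (((1-uu)*(1-vv))^2)^(l+2) = ((1-uu)*(1-vv))^(2*l+4) := by
      rw [← pow_mul, en]
    rw [e1, e2] at h3
    have h4 : ((1+uu)*(1+vv))^2 - ((1-uu)*(1-vv))^2 = 4*(uu+vv)*(1+qq) := by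
      rw [hq]; ring
    rw [h4] at h3
    linear_combination -h3
  have hDd : (2:QuvField) * ((1-qq)^2*(1+qq)) ≠ 0 :=
    mul_ne_zero h2 (mul_ne_zero (pow_ne_zero _ ht) h1q)
  have key : Estringy (2*l+4)
      = 2 * qq^(2*l+3) * (uu+vv) * (∑ j ∈ Finset.range (l+2),
          (((1+uu)*(1+vv))^2)^j * (((1-uu)*(1-vv))^2)^(l+2-1-j))
        + (∑ k ∈ Finset.range (2*l+4),
          (((2*l+4).choose (k+1) : ℕ) : QuvField)
            * (((1-qq)^2*(1+qq))^k * (qq*((1-uu)*(1-vv)))^(2*l+3-k))) := by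
    apply mul_right_cancel₀ hDd
    have hrepr : Estringy (2*l+4)
        = (((1 - uu^2*vv)^(2*l+4) * (1 - uu*vv^2)^(2*l+4)
              - qq^(2*l+3+2)*((1-uu)^(2*l+4)*(1-vv)^(2*l+4))) / ((1-qq)*(1-qq^2))
            - (qq^(2*l+3)/2) * ((1-uu)^(2*l+4)*(1-vv)^(2*l+4)/(1-qq)
              - (1+uu)^(2*l+4)*(1+vv)^(2*l+4)/(1+qq))) := by
      rw [Estringy]
      rw [show 2*l+4-1 = 2*l+3 from by omega, show 2*l+4+1 = 2*l+3+2 from by omega]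
      rw [mul_assoc (qq^(2*l+3+2))]
    rw [hrepr, hEaux _ _ _ _ _ ht h1q h2, hA, hS2, hgeom,
      mul_pow qq ((1-uu)*(1-vv)) (2*l+4), mul_pow (1-uu) (1-vv) (2*l+4)]
    ring
  rw [key, ← Algebra.mem_bot (R := MvPolynomial (Fin 2) ℚ)]
  have hu : uu ∈ (⊥ : Subalgebra (MvPolynomial (Fin 2) ℚ) QuvField) :=
    Algebra.mem_bot.2 ⟨MvPolynomial.X 0, rfl⟩
  have hv : vv ∈ (⊥ : Subalgebra (MvPolynomial (Fin 2) ℚ) QuvField) :=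
    Algebra.mem_bot.2 ⟨MvPolynomial.X 1, rfl⟩
  have hqm : qq ∈ (⊥ : Subalgebra (MvPolynomial (Fin 2) ℚ) QuvField) := by
    rw [hq]; exact mul_mem hu hv
  have h2m : (2:QuvField) ∈ (⊥ : Subalgebra (MvPolynomial (Fin 2) ℚ) QuvField) := by
    have := Subalgebra.natCast_mem (⊥ : Subalgebra (MvPolynomial (Fin 2) ℚ) QuvField) 2
    norm_num at this
    exact_mod_cast Subalgebra.natCast_mem (⊥ : Subalgebra (MvPolynomial (Fin 2) ℚ) QuvField) 2
  have h4m : (4:QuvField) ∈ (⊥ : Subalgebra (MvPolynomial (Fin 2) ℚ) QuvField) := by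
    have := Subalgebra.natCast_mem (⊥ : Subalgebra (MvPolynomial (Fin 2) ℚ) QuvField) 4
    norm_num at this
    exact_mod_cast Subalgebra.natCast_mem (⊥ : Subalgebra (MvPolynomial (Fin 2) ℚ) QuvField) 4
  refine add_mem (mul_mem (mul_mem (mul_mem h2m (pow_mem hqm _)) (add_mem hu hv)) ?_) ?_
  · exact sum_mem fun j _ => mul_mem
      (pow_mem (pow_mem (mul_mem (add_mem (one_mem _) hu) (add_mem (one_mem _) hv)) 2) j)
      (pow_mem (pow_mem (mul_mem (sub_mem (one_mem _) hu) (sub_mem (one_mem _) hv)) 2) _)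
  · exact sum_mem fun k _ => mul_mem (Subalgebra.natCast_mem _ _)
      (mul_mem (pow_mem (mul_mem (pow_mem (sub_mem (one_mem _) hqm) 2)
          (add_mem (one_mem _) hqm)) k)
        (pow_mem (mul_mem hqm (mul_mem (sub_mem (one_mem _) hu) (sub_mem (one_mem _) hv))) _))

end
end
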